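/- arXiv:1509.02322 — 4 statements merged into one kernel-verified Lean document; each statement's English description precedes it below -/
import Mathlib

section
/- Let $0<q<1$ and let $Z_1,\dots,Z_N$ be independent nonnegative random variables satisfying $\mathbb{P}(Z_i \ge t) \le t^{-q}$ for all $t\ge 1$ and all $i$. Let $(Z_i^*)$ denote the nonincreasing rearrangement of $(Z_i)$. Then for every $s>1$ and every $1\le k\le N$, with probability at least $1 - s^{-k}$, one has $\sum_{i=k}^N Z_i^* \le \frac{(2es)^{1/q}}{1-q} N^{1/q} k^{1-1/q}$. -/
open MeasureTheory ProbabilityTheory Finset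
open scoped ENNReal

/-- The `i`-th largest value (zero-based: `i = 0` is the largest) among `v 0, …, v (N-1)`. -/
noncomputable def orderStat {N : ℕ} (v : Fin N → ℝ) (i : Fin N) : ℝ :=
  v (Tuple.sort v i.rev)

lemma orderStat_prop_iff {N : ℕ} (v : Fin N → ℝ) (i : Fin N) (P : ℝ → Prop) [DecidablePred P]
    (hP : ∀ a b : ℝ, a ≤ b → P a → P b) :
    P (orderStat v i) ↔ (i : ℕ) + 1 ≤ (univ.filter fun j => P (v j)).card := by
  set σ := Tuple.sort v with hσ
  have hm : Monotone (v ∘ σ) := Tuple.monotone_sort v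
  have hrev : (i.rev : ℕ) = N - 1 - (i : ℕ) := by
    simp [Fin.rev]; omega
  constructor
  · intro h
    have hsub : (Finset.Ici i.rev).image σ ⊆ univ.filter fun j => P (v j) := by
      intro j hj
      simp only [Finset.mem_image, Finset.mem_Ici] at hj
      obtain ⟨l, hl, rfl⟩ := hj
      simp only [Finset.mem_filter, Finset.mem_univ, true_and]
      exact hP _ _ (hm hl) h
    have hcard : (Finset.Ici i.rev).card = (i : ℕ) + 1 := by
      rw [Fin.card_Ici]
      have := i.isLt
      omega
    calc (i : ℕ) + 1 = ((Finset.Ici i.rev).image σ).card := by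
          rw [Finset.card_image_of_injective _ σ.injective, hcard]
      _ ≤ _ := Finset.card_le_card hsub
  · intro h
    by_contra hc
    have hsub : (univ.filter fun j => P (v j)) ⊆ (Finset.Ioi i.rev).image σ := by
      intro j hj
      simp only [Finset.mem_filter, Finset.mem_univ, true_and] at hj
      simp only [Finset.mem_image, Finset.mem_Ioi]
      refine ⟨σ.symm j, ?_, by simp⟩
      by_contra hlt
      push_neg at hlt
      exact hc (hP _ _ (by have h' := hm hlt; simp at h'; exact h') hj)
    have hcard : (Finset.Ioi i.rev).card ≤ (i : ℕ) := by
      rw [Fin.card_Ioi]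
      omega
    have := (Finset.card_le_card hsub).trans
      ((Finset.card_image_le).trans hcard)
    omega


lemma setOf_card_ge {Ω : Type*} {N : ℕ} (P : Fin N → Ω → Prop) [∀ j ω, Decidable (P j ω)] (m : ℕ) :
    {ω | m ≤ (univ.filter fun j => P j ω).card} =
      ⋃ S ∈ Finset.powersetCard m (univ : Finset (Fin N)), ⋂ j ∈ S, {ω | P j ω} := by
  ext ω
  simp only [Set.mem_setOf_eq, Set.mem_iUnion, Set.mem_iInter, Finset.mem_powersetCard_univ]
  constructor
  · intro h
    obtain ⟨S, hS, hcard⟩ := Finset.exists_subset_card_eq h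
    exact ⟨S, hcard, fun j hj => (Finset.mem_filter.1 (hS hj)).2⟩
  · rintro ⟨S, hcard, hall⟩
    calc m = S.card := hcard.symm
      _ ≤ _ := Finset.card_le_card fun j hj => Finset.mem_filter.2 ⟨Finset.mem_univ _, hall j hj⟩

lemma measurableSet_card_ge {Ω : Type*} [MeasurableSpace Ω] {N : ℕ} (Z : Fin N → Ω → ℝ)
    (hmeas : ∀ i, Measurable (Z i)) (t : ℝ) (m : ℕ) :
    MeasurableSet {ω | m ≤ (univ.filter fun j => t < Z j ω).card} := by
  rw [setOf_card_ge]
  exact MeasurableSet.biUnion (Finset.powersetCard m univ).countable_toSet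
    (fun S _ => MeasurableSet.biInter S.countable_toSet
      (fun j _ => measurableSet_lt measurable_const (hmeas j)))

lemma meas_card_ge_le {Ω : Type*} [MeasurableSpace Ω] (μ : Measure Ω) [IsProbabilityMeasure μ]
    {N : ℕ} {q : ℝ} (Z : Fin N → Ω → ℝ)
    (hindep : iIndepFun Z μ)
    (htail : ∀ i, ∀ t : ℝ, 1 ≤ t → μ {ω | t ≤ Z i ω} ≤ ENNReal.ofReal (t ^ (-q)))
    (t : ℝ) (ht : 1 ≤ t) (m : ℕ) :
    μ {ω | m ≤ (univ.filter fun j => t ≤ Z j ω).card} ≤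
      (N.choose m : ℝ≥0∞) * ENNReal.ofReal (t ^ (-q)) ^ m := by
  rw [setOf_card_ge]
  refine le_trans (measure_biUnion_finset_le _ _) ?_
  have hbound : ∀ S ∈ Finset.powersetCard m (univ : Finset (Fin N)),
      μ (⋂ j ∈ S, {ω | t ≤ Z j ω}) ≤ ENNReal.ofReal (t ^ (-q)) ^ m := by
    intro S hS
    rw [Finset.mem_powersetCard_univ] at hS
    have := hindep.meas_biInter (S := S) (s := fun j => {ω | t ≤ Z j ω})
      (fun j _ => ⟨Set.Ici t, measurableSet_Ici, rfl⟩)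
    rw [this]
    calc ∏ j ∈ S, μ {ω | t ≤ Z j ω} ≤ ∏ j ∈ S, ENNReal.ofReal (t ^ (-q)) :=
          Finset.prod_le_prod' fun j _ => htail j t ht
      _ = ENNReal.ofReal (t ^ (-q)) ^ m := by rw [Finset.prod_const, hS]
  calc ∑ S ∈ Finset.powersetCard m (univ : Finset (Fin N)), μ (⋂ j ∈ S, {ω | t ≤ Z j ω})
      ≤ ∑ _S ∈ Finset.powersetCard m (univ : Finset (Fin N)), ENNReal.ofReal (t ^ (-q)) ^ m :=
        Finset.sum_le_sum hbound
    _ = (N.choose m : ℝ≥0∞) * ENNReal.ofReal (t ^ (-q)) ^ m := by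
        rw [Finset.sum_const, Finset.card_powersetCard, Finset.card_univ, Fintype.card_fin,
          nsmul_eq_mul]


lemma geom_bound {s : ℝ} (hs : 1 < s) {k : ℕ} (hk : 1 ≤ k) (N : ℕ) :
    ∑ m ∈ Finset.Icc k N, ((2 * s)⁻¹) ^ m ≤ s⁻¹ ^ k := by
  have hs0 : (0:ℝ) < s := lt_trans one_pos hs
  have h2s : (1:ℝ) < 2 * s := by nlinarith
  have hx0 : (0:ℝ) ≤ (2*s)⁻¹ := by positivity
  have hx1 : (2*s)⁻¹ < 1 := by
    rw [inv_lt_one_iff₀]; right; exact h2s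
  rcases le_or_gt k (N+1) with hkN | hkN
  · calc ∑ m ∈ Finset.Icc k N, ((2 * s)⁻¹) ^ m
        = ∑ m ∈ Finset.Ico k (N+1), ((2 * s)⁻¹) ^ m := by
          rw [Finset.Ico_add_one_right_eq_Icc]
      _ ≤ ((2*s)⁻¹) ^ k / (1 - (2*s)⁻¹) := geom_sum_Ico_le_of_lt_one hx0 hx1
      _ ≤ s⁻¹ ^ k := by
          rw [div_le_iff₀ (by linarith)]
          have h1 : ((2*s)⁻¹ : ℝ) ^ k = s⁻¹ ^ k * 2⁻¹ ^ k := by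
            rw [← mul_pow, mul_comm (2:ℝ) s, mul_inv]
          rw [h1]
          have h2 : (2:ℝ)⁻¹ ^ k ≤ 2⁻¹ := by
            calc (2:ℝ)⁻¹ ^ k ≤ 2⁻¹ ^ 1 :=
              pow_le_pow_of_le_one (by norm_num) (by norm_num) hk
            _ = 2⁻¹ := pow_one _
          have h3 : (2:ℝ)⁻¹ ≤ 1 - (2*s)⁻¹ := by
            rw [mul_inv]
            have : (2:ℝ)⁻¹ * s⁻¹ ≤ 2⁻¹ * 1 := by
              apply mul_le_mul_of_nonneg_left _ (by norm_num)
              rw [inv_le_one_iff₀]; right; linarith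
            linarith
          have h4 : (0:ℝ) ≤ s⁻¹ ^ k := by positivity
          nlinarith [mul_le_mul_of_nonneg_left h2 h4, mul_le_mul_of_nonneg_left h3 h4]
  · have : Finset.Icc k N = ∅ := by
      rw [Finset.Icc_eq_empty_iff]; omega
    rw [this, Finset.sum_empty]
    positivity

lemma choose_bound (N : ℕ) {m : ℕ} (hm : 1 ≤ m) :
    (N.choose m : ℝ) ≤ (Real.exp 1 * N / m) ^ m := by
  have hm0 : (0:ℝ) < m := by exact_mod_cast hm
  have h1 : (N.choose m : ℝ) ≤ (N:ℝ) ^ m / (Nat.factorial m) := Nat.choose_le_pow_div m N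
  have h2 : (m:ℝ) ^ m / (Nat.factorial m) ≤ Real.exp m :=
    Real.pow_div_factorial_le_exp (m:ℝ) hm0.le m
  have hfac : (0:ℝ) < (Nat.factorial m : ℝ) := by exact_mod_cast m.factorial_pos
  have h3 : ((Nat.factorial m : ℝ))⁻¹ ≤ Real.exp m / (m:ℝ)^m := by
    rw [le_div_iff₀ (by positivity)]
    rw [div_le_iff₀ hfac] at h2
    calc (Nat.factorial m : ℝ)⁻¹ * (m:ℝ)^m = (m:ℝ)^m / (Nat.factorial m) := by ring
      _ ≤ Real.exp m := Real.pow_div_factorial_le_exp (m:ℝ) hm0.le m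
  calc (N.choose m : ℝ) ≤ (N:ℝ) ^ m / (Nat.factorial m) := h1
    _ = (N:ℝ)^m * ((Nat.factorial m : ℝ))⁻¹ := by ring
    _ ≤ (N:ℝ)^m * (Real.exp m / (m:ℝ)^m) := by
        apply mul_le_mul_of_nonneg_left h3 (by positivity)
    _ = (Real.exp 1 * N / m) ^ m := by
        rw [← Real.exp_one_pow, div_pow, mul_pow]
        ring


lemma reindex_tail {N k : ℕ} (f : ℕ → ℝ) :
    ∑ m ∈ Finset.Icc (k+1) N, f m = ∑ i ∈ Finset.Ico k N, f (i+1) := by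
  apply Finset.sum_nbij' (fun m => m - 1) (fun i => i + 1)
  · intro m hm; simp only [Finset.mem_Icc] at hm; simp only [Finset.mem_Ico]; omega
  · intro i hi; simp only [Finset.mem_Ico] at hi; simp only [Finset.mem_Icc]; omega
  · intro m hm; simp only [Finset.mem_Icc] at hm; omega
  · intro i hi; omega
  · intro m hm; simp only [Finset.mem_Icc] at hm
    congr 1; omega

lemma sum_rpow_bound {q : ℝ} (hq0 : 0 < q) (hq1 : q < 1) {k N : ℕ} (hk : 1 ≤ k) (hkN : k ≤ N) :
    ∑ m ∈ Finset.Icc k N, (m:ℝ) ^ (-(1/q)) ≤ (k:ℝ) ^ (1 - 1/q) / (1-q) := by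
  set r : ℝ := 1/q with hr
  have hr1 : 1 < r := (one_lt_div hq0).2 hq1
  have hk0 : (0:ℝ) < k := by exact_mod_cast hk
  have hk1 : (1:ℝ) ≤ k := by exact_mod_cast hk
  have hkN' : (k:ℝ) ≤ N := by exact_mod_cast hkN
  have hsplit : Finset.Icc k N = insert k (Finset.Icc (k+1) N) := by
    ext m
    simp only [Finset.mem_Icc, Finset.mem_insert]
    omega
  have hnotmem : k ∉ Finset.Icc (k+1) N := by simp
  rw [hsplit, Finset.sum_insert hnotmem, reindex_tail]
  -- tail bound via integral
  have hanti : AntitoneOn (fun x : ℝ => x ^ (-r)) (Set.Icc (k:ℝ) (N:ℝ)) := by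
    intro x hx y hy hxy
    exact Real.rpow_le_rpow_of_nonpos (lt_of_lt_of_le hk0 hx.1) hxy (by linarith)
  have htail : ∑ i ∈ Finset.Ico k N, ((i+1 : ℕ) : ℝ) ^ (-r) ≤
      ∫ x in (k:ℝ)..(N:ℝ), x ^ (-r) := by
    have := AntitoneOn.sum_le_integral_Ico hkN hanti
    convert this using 2 <;> push_cast <;> ring_nf
  have hint : ∫ x in (k:ℝ)..(N:ℝ), x ^ (-r) = ((N:ℝ) ^ (-r+1) - (k:ℝ) ^ (-r+1)) / (-r+1) := by
    apply integral_rpow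
    right
    constructor
    · intro h; rw [neg_eq_iff_eq_neg] at h; rw [h] at hr1; norm_num at hr1
    · intro h
      rw [Set.mem_uIcc] at h
      rcases h with ⟨h1, _⟩ | ⟨h1, _⟩ <;> linarith
  have hNe : (0:ℝ) ≤ (N:ℝ) ^ (-r+1) := Real.rpow_nonneg (by positivity) _
  have hintle : ∫ x in (k:ℝ)..(N:ℝ), x ^ (-r) ≤ (k:ℝ) ^ (1-r) * (q/(1-q)) := by
    rw [hint]
    have he : -r + 1 < 0 := by linarith
    rw [div_le_iff_of_neg he]
    have h1 : (k:ℝ) ^ (1-r) * (q / (1 - q)) * (-r + 1) = -((k:ℝ) ^ (1-r)) * ((q/(1-q)) * (r-1)) := by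
      ring
    have hq1' : q - q^2 ≠ 0 := by nlinarith
    have h2 : (q/(1-q)) * (r-1) = 1 := by
      rw [hr]
      field_simp
      exact div_self (sub_ne_zero.mpr (ne_of_gt hq1))
    have h3 : (1:ℝ) - r = -r + 1 := by ring
    rw [h1, h2, mul_one, h3]
    linarith
  have hfirst : (k:ℝ) ^ (-r) ≤ (k:ℝ) ^ (1-r) :=
    Real.rpow_le_rpow_of_exponent_le hk1 (by linarith)
  have h1q : (1:ℝ) - q ≠ 0 := by linarith
  have hcomb : (k:ℝ) ^ (1-r) + (k:ℝ) ^ (1-r) * (q/(1-q)) = (k:ℝ) ^ (1-r) / (1-q) := by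
    field_simp
    ring
  calc (k:ℝ) ^ (-r) + ∑ i ∈ Finset.Ico k N, ((i+1 : ℕ) : ℝ) ^ (-r)
      ≤ (k:ℝ) ^ (1-r) + (k:ℝ) ^ (1-r) * (q/(1-q)) := by
        have := htail.trans hintle
        exact add_le_add hfirst this
    _ = (k:ℝ) ^ (1-r) / (1-q) := hcomb


lemma reindex_fin {N k : ℕ} (f : ℕ → ℝ) :
    ∑ i ∈ Finset.univ.filter (fun i : Fin N => k ≤ (i : ℕ) + 1), f ((i : ℕ) + 1)
      = ∑ m ∈ Finset.Icc (max k 1) N, f m := by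
  apply Finset.sum_bij (fun (i : Fin N) _ => (i : ℕ) + 1)
  · intro i hi
    simp only [Finset.mem_filter, Finset.mem_univ, true_and] at hi
    simp only [Finset.mem_Icc]
    have := i.isLt
    omega
  · intro a ha b hb h
    exact Fin.ext (by omega)
  · intro m hm
    simp only [Finset.mem_Icc] at hm
    refine ⟨⟨m - 1, by omega⟩, ?_, by simp only [Fin.val_mk]; omega⟩
    simp only [Finset.mem_filter, Finset.mem_univ, true_and, Fin.val_mk]
    omega
  · intro i hi; rfl

theorem stmt3 {Ω : Type*} [MeasurableSpace Ω] (μ : Measure Ω) [IsProbabilityMeasure μ]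
    (N : ℕ) (q : ℝ) (hq0 : 0 < q) (hq1 : q < 1) (Z : Fin N → Ω → ℝ)
    (hmeas : ∀ i, Measurable (Z i))
    (hindep : iIndepFun Z μ)
    (hnonneg : ∀ i ω, 0 ≤ Z i ω)
    (htail : ∀ i, ∀ t : ℝ, 1 ≤ t → μ {ω | t ≤ Z i ω} ≤ ENNReal.ofReal (t ^ (-q)))
    (s : ℝ) (hs : 1 < s) (k : ℕ) (hk1 : 1 ≤ k) (hkN : k ≤ N) :
    1 - ENNReal.ofReal (s⁻¹ ^ k) ≤
      μ {ω | ∑ i ∈ Finset.univ.filter (fun i : Fin N => k ≤ (i : ℕ) + 1),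
              orderStat (fun j => Z j ω) i
            ≤ (2 * Real.exp 1 * s) ^ (1/q) / (1 - q) * (N : ℝ) ^ (1/q) * (k : ℝ) ^ (1 - 1/q)} := by
  have hs0 : (0:ℝ) < s := lt_trans one_pos hs
  have hN1 : 1 ≤ N := le_trans hk1 hkN
  have hN0 : (0:ℝ) < N := by exact_mod_cast hN1
  have he : (0:ℝ) < Real.exp 1 := Real.exp_pos 1
  have hq0' : q ≠ 0 := ne_of_gt hq0
  set r : ℝ := 1/q with hr
  have hr0 : 0 < r := by positivity
  set A : ℝ := 2 * Real.exp 1 * s * N with hA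
  have hA0 : 0 < A := by positivity
  set T : ℕ → ℝ := fun m => (A / m) ^ r with hT
  have hT1 : ∀ m, 1 ≤ m → m ≤ N → 1 ≤ T m := by
    intro m hm hmN
    have hm0 : (0:ℝ) < m := by exact_mod_cast hm
    have hmN' : (m:ℝ) ≤ N := by exact_mod_cast hmN
    apply Real.one_le_rpow _ hr0.le
    rw [le_div_iff₀ hm0, one_mul]
    calc (m:ℝ) ≤ (N:ℝ) := hmN'
      _ ≤ 2 * Real.exp 1 * s * N := by
          have h1 : (1:ℝ) ≤ 2 * Real.exp 1 * s := by nlinarith [Real.exp_one_gt_d9]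
          nlinarith [mul_le_mul_of_nonneg_right h1 hN0.le]
  set F : Finset (Fin N) := Finset.univ.filter (fun i : Fin N => k ≤ (i : ℕ) + 1) with hF
  set E : Set Ω := ⋂ i ∈ F, {ω | (univ.filter fun j => T ((i:ℕ)+1) < Z j ω).card ≤ (i:ℕ)} with hE
  have hAcompl : ∀ i : Fin N, {ω | (univ.filter fun j => T ((i:ℕ)+1) < Z j ω).card ≤ (i:ℕ)}ᶜ
      = {ω | (i:ℕ)+1 ≤ (univ.filter fun j => T ((i:ℕ)+1) < Z j ω).card} := by
    intro i
    ext ω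
    simp only [Set.mem_compl_iff, Set.mem_setOf_eq]
    omega
  have hEmeas : MeasurableSet E := by
    apply MeasurableSet.biInter F.countable_toSet
    intro i _
    rw [← compl_compl {ω | (univ.filter fun j => T ((i:ℕ)+1) < Z j ω).card ≤ (i:ℕ)}, hAcompl]
    exact (measurableSet_card_ge Z hmeas _ _).compl
  -- deterministic bound
  have hdet : ∑ m ∈ Finset.Icc k N, T m
      ≤ (2 * Real.exp 1 * s) ^ r / (1 - q) * (N:ℝ) ^ r * (k:ℝ) ^ (1 - r) := by
    have hTm : ∀ m ∈ Finset.Icc k N, T m = A ^ r * (m:ℝ) ^ (-r) := by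
      intro m hm
      simp only [Finset.mem_Icc] at hm
      have hm0 : (0:ℝ) < m := by
        have : 1 ≤ m := hk1.trans hm.1
        exact_mod_cast this
      simp only [hT]
      rw [Real.div_rpow hA0.le hm0.le, Real.rpow_neg hm0.le, div_eq_mul_inv]
    rw [Finset.sum_congr rfl hTm, ← Finset.mul_sum]
    have hsum := sum_rpow_bound hq0 hq1 hk1 hkN
    rw [← hr] at hsum
    calc A ^ r * ∑ m ∈ Finset.Icc k N, (m:ℝ) ^ (-r)
        ≤ A ^ r * ((k:ℝ)^(1-r)/(1-q)) :=
          mul_le_mul_of_nonneg_left hsum (Real.rpow_nonneg hA0.le _)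
      _ = (2 * Real.exp 1 * s) ^ r / (1 - q) * (N:ℝ) ^ r * (k:ℝ) ^ (1 - r) := by
          rw [hA, Real.mul_rpow (by positivity) hN0.le]
          ring
  -- E is contained in the target event
  have hsub : E ⊆ {ω | ∑ i ∈ F, orderStat (fun j => Z j ω) i
      ≤ (2 * Real.exp 1 * s) ^ r / (1 - q) * (N : ℝ) ^ r * (k : ℝ) ^ (1 - r)} := by
    intro ω hω
    simp only [Set.mem_setOf_eq]
    have hle : ∀ i ∈ F, orderStat (fun j => Z j ω) i ≤ T ((i:ℕ)+1) := by
      intro i hi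
      have hω' : ω ∈ {ω | (univ.filter fun j => T ((i:ℕ)+1) < Z j ω).card ≤ (i:ℕ)} :=
        Set.mem_iInter₂.1 hω i hi
      simp only [Set.mem_setOf_eq] at hω'
      by_contra hlt
      push_neg at hlt
      have := (orderStat_prop_iff (fun j => Z j ω) i (fun t => T ((i:ℕ)+1) < t)
        (fun a b hab h => lt_of_lt_of_le h hab)).1 hlt
      omega
    calc ∑ i ∈ F, orderStat (fun j => Z j ω) i ≤ ∑ i ∈ F, T ((i:ℕ)+1) :=
          Finset.sum_le_sum hle
      _ = ∑ m ∈ Finset.Icc (max k 1) N, T m := reindex_fin T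
      _ = ∑ m ∈ Finset.Icc k N, T m := by rw [max_eq_left hk1]
      _ ≤ _ := hdet
  -- rpow computation
  have hTq : ∀ m : ℕ, 1 ≤ m → (T m) ^ (-q) = m / A := by
    intro m hm
    have hm0 : (0:ℝ) < m := by exact_mod_cast hm
    have hX : (0:ℝ) ≤ A / m := by positivity
    simp only [hT]
    rw [← Real.rpow_mul hX]
    have hrq : r * -q = -1 := by rw [hr]; field_simp
    rw [hrq, Real.rpow_neg_one, inv_div]
  -- per-term bound
  have hterm : ∀ m ∈ Finset.Icc k N, (N.choose m : ℝ) * ((T m)^(-q))^m ≤ ((2*s)⁻¹)^m := by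
    intro m hm
    simp only [Finset.mem_Icc] at hm
    have hm1 : 1 ≤ m := hk1.trans hm.1
    have hm0 : (0:ℝ) < m := by exact_mod_cast hm1
    rw [hTq m hm1]
    have h1 : (N.choose m : ℝ) ≤ (Real.exp 1 * N / m)^m := choose_bound N hm1
    have h2 : (0:ℝ) ≤ ((m:ℝ)/A)^m := by positivity
    calc (N.choose m : ℝ) * ((m:ℝ)/A)^m ≤ (Real.exp 1 * N / m)^m * ((m:ℝ)/A)^m :=
          mul_le_mul_of_nonneg_right h1 h2
      _ = ((Real.exp 1 * N / m) * ((m:ℝ)/A))^m := (mul_pow _ _ _).symm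
      _ = ((2*s)⁻¹)^m := by
          congr 1
          rw [hA]
          have hm' : (m:ℝ) ≠ 0 := ne_of_gt hm0
          have hN' : (N:ℝ) ≠ 0 := ne_of_gt hN0
          have hs' : s ≠ 0 := ne_of_gt hs0
          have he' : Real.exp 1 ≠ 0 := ne_of_gt he
          field_simp
  -- probability bound
  have hcompl : μ Eᶜ ≤ ENNReal.ofReal (s⁻¹ ^ k) := by
    have hEc : Eᶜ = ⋃ i ∈ F,
        {ω | (i:ℕ)+1 ≤ (univ.filter fun j => T ((i:ℕ)+1) < Z j ω).card} := by
      rw [hE, Set.compl_iInter₂]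
      exact Set.iUnion₂_congr fun i _ => hAcompl i
    calc μ Eᶜ ≤ ∑ i ∈ F, μ {ω | (i:ℕ)+1 ≤ (univ.filter fun j => T ((i:ℕ)+1) < Z j ω).card} := by
          rw [hEc]; exact measure_biUnion_finset_le _ _
      _ ≤ ∑ i ∈ F, ENNReal.ofReal ((N.choose ((i:ℕ)+1) : ℝ) * ((T ((i:ℕ)+1))^(-q))^((i:ℕ)+1)) := by
          apply Finset.sum_le_sum
          intro i _
          have hiN : (i:ℕ)+1 ≤ N := i.isLt
          have ht1 : 1 ≤ T ((i:ℕ)+1) := hT1 ((i:ℕ)+1) (Nat.le_add_left 1 _) hiN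
          have hsubset : {ω | (i:ℕ)+1 ≤ (univ.filter fun j => T ((i:ℕ)+1) < Z j ω).card}
              ⊆ {ω | (i:ℕ)+1 ≤ (univ.filter fun j => T ((i:ℕ)+1) ≤ Z j ω).card} := by
            intro ω h
            simp only [Set.mem_setOf_eq] at h ⊢
            exact h.trans (Finset.card_le_card
              (fun j hj => by simp only [Finset.mem_filter] at hj ⊢; exact ⟨hj.1, le_of_lt hj.2⟩))
          refine le_trans (measure_mono hsubset) ?_
          refine le_trans (meas_card_ge_le μ Z hindep htail _ ht1 _) (le_of_eq ?_)
          rw [ENNReal.ofReal_mul (Nat.cast_nonneg _), ENNReal.ofReal_natCast,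
            ENNReal.ofReal_pow (Real.rpow_nonneg (le_trans zero_le_one ht1) _)]
      _ = ENNReal.ofReal (∑ i ∈ F, (N.choose ((i:ℕ)+1) : ℝ) * ((T ((i:ℕ)+1))^(-q))^((i:ℕ)+1)) :=
          (ENNReal.ofReal_sum_of_nonneg (fun i _ => by positivity)).symm
      _ ≤ ENNReal.ofReal (s⁻¹ ^ k) := by
          apply ENNReal.ofReal_le_ofReal
          have hre := reindex_fin (N := N) (k := k) (fun m => (N.choose m : ℝ) * ((T m)^(-q))^m)
          rw [max_eq_left hk1] at hre
          rw [hF]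
          rw [hre]
          calc ∑ m ∈ Finset.Icc k N, (N.choose m : ℝ) * ((T m)^(-q))^m
              ≤ ∑ m ∈ Finset.Icc k N, ((2*s)⁻¹)^m := Finset.sum_le_sum hterm
            _ ≤ s⁻¹ ^ k := geom_bound hs hk1 N
  have hE1 : 1 - ENNReal.ofReal (s⁻¹^k) ≤ μ E := by
    have h2 : μ E = 1 - μ Eᶜ := by
      have h3 := prob_compl_eq_one_sub (μ := μ) hEmeas.compl
      rwa [compl_compl] at h3
    rw [h2]
    exact tsub_le_tsub_left hcompl 1
  exact le_trans hE1 (measure_mono hsub)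
end

section
/- Let $q=1$ and let $Z_1,\dots,Z_N$ be independent nonnegative random variables satisfying $\mathbb{P}(Z_i \ge t) \le 1/t$ for all $t\ge 1$ and all $i$. Then for every $s>1$ and $1\le k\le N$, with probability at least $1-s^{-k}$, $\sum_{i=k}^N Z_i^* \le 2es\, N \ln(eN/k)$, where $(Z_i^*)$ is the nonincreasing rearrangement of $(Z_i)$. -/
open MeasureTheory ProbabilityTheory Finset
open scoped ENNReal

lemma le_orderStat_iff {N : ℕ} (v : Fin N → ℝ) (i : Fin N) (t : ℝ) :
    t ≤ orderStat v i ↔ (i : ℕ) < Fintype.card {l // t ≤ v l} := by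
  classical
  have hmono := Tuple.monotone_sort v
  set σ := Tuple.sort v with hσ
  have hg : Antitone (fun l : Fin N => v (σ l.rev)) := by
    intro a b hab
    exact hmono (show (fun l => l.rev) b ≤ (fun l => l.rev) a from Fin.rev_le_rev.mpr hab)
  have h := Tuple.lt_card_ge_iff_apply_ge_of_antitone (f := fun l : Fin N => v (σ l.rev)) (a := t) (j := i) hg
  have hcard : Fintype.card {l // t ≤ v (σ (Fin.rev l))} = Fintype.card {l // t ≤ v l} := by
    exact Fintype.card_congr (Equiv.subtypeEquiv (Fin.revPerm.trans σ) (fun a => Iff.rfl))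
  rw [orderStat, ← h, ← Fintype.card_subtype, hcard]

lemma pow_self_le_exp_mul_factorial : ∀ j : ℕ, (j : ℝ) ^ j ≤ Real.exp 1 ^ j * j.factorial
  | 0 => by simp
  | (j+1) => by
    have ih := pow_self_le_exp_mul_factorial j
    have h1 : ((j:ℝ)+1) ^ j ≤ Real.exp 1 * (j:ℝ) ^ j := by
      rcases Nat.eq_zero_or_pos j with h | h
      · subst h; simpa using Real.one_le_exp zero_le_one
      · have hj : (0:ℝ) < j := by exact_mod_cast h
        have h2 : (j:ℝ) + 1 ≤ (j:ℝ) * Real.exp (1/(j:ℝ)) := by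
          have := Real.add_one_le_exp (1/(j:ℝ))
          calc (j:ℝ) + 1 = (j:ℝ) * (1/(j:ℝ) + 1) := by field_simp; ring
            _ ≤ (j:ℝ) * Real.exp (1/(j:ℝ)) := by
                exact mul_le_mul_of_nonneg_left this (le_of_lt hj)
        calc ((j:ℝ)+1) ^ j ≤ ((j:ℝ) * Real.exp (1/(j:ℝ))) ^ j := by
              apply pow_le_pow_left₀ (by positivity) h2
          _ = (j:ℝ) ^ j * Real.exp (1/(j:ℝ)) ^ j := by rw [mul_pow]
          _ = (j:ℝ) ^ j * Real.exp 1 := by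
              rw [← Real.exp_nat_mul]
              congr 1
              field_simp
          _ = Real.exp 1 * (j:ℝ) ^ j := by ring
    have hnn : (0:ℝ) ≤ (j:ℝ) + 1 := by positivity
    have hc : ((j+1:ℕ):ℝ) = (j:ℝ)+1 := by push_cast; ring
    rw [hc]
    calc ((j:ℝ)+1) ^ (j+1) = ((j:ℝ)+1) * ((j:ℝ)+1) ^ j := by ring
      _ ≤ ((j:ℝ)+1) * (Real.exp 1 * (j:ℝ) ^ j) := by
          exact mul_le_mul_of_nonneg_left h1 hnn
      _ ≤ ((j:ℝ)+1) * (Real.exp 1 * (Real.exp 1 ^ j * j.factorial)) := by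
          refine mul_le_mul_of_nonneg_left (mul_le_mul_of_nonneg_left ih (le_of_lt (Real.exp_pos 1))) hnn
      _ = Real.exp 1 ^ (j+1) * ((j+1) * j.factorial) := by ring
      _ = Real.exp 1 ^ (j+1) * (j+1).factorial := by
          rw [Nat.factorial_succ]; push_cast; ring

lemma choose_bound_s4 (N j : ℕ) (s : ℝ) (hs : 1 < s) (hj : 1 ≤ j) (hjN : j ≤ N) :
    (N.choose j : ℝ) * (2 * Real.exp 1 * s * N / j)⁻¹ ^ j ≤ ((2*s)⁻¹) ^ j := by
  have hjpos : (0:ℝ) < j := by exact_mod_cast hj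
  have hNpos : (0:ℝ) < N := by exact_mod_cast lt_of_lt_of_le (Nat.lt_of_lt_of_le Nat.zero_lt_one hj) hjN
  have he : (0:ℝ) < Real.exp 1 := Real.exp_pos 1
  have hspos : (0:ℝ) < s := lt_trans one_pos hs
  have hchoose : (N.choose j : ℝ) ≤ (N:ℝ)^j / j.factorial := Nat.choose_le_pow_div j N
  have hjj : (j:ℝ)^j ≤ Real.exp 1 ^ j * j.factorial := pow_self_le_exp_mul_factorial j
  have hfact : (0:ℝ) < j.factorial := by exact_mod_cast j.factorial_pos
  have hinv : (2 * Real.exp 1 * s * N / j)⁻¹ ^ j = (j:ℝ)^j / (2 * Real.exp 1 * s * N)^j := by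
    rw [inv_div, div_pow]
  rw [hinv]
  calc (N.choose j : ℝ) * ((j:ℝ)^j / (2 * Real.exp 1 * s * N)^j)
      ≤ ((N:ℝ)^j / j.factorial) * ((Real.exp 1 ^ j * j.factorial) / (2 * Real.exp 1 * s * N)^j) := by
        apply mul_le_mul hchoose _ (by positivity) (by positivity)
        apply div_le_div_of_nonneg_right hjj (by positivity)
    _ = ((2*s)⁻¹)^j := by
        have hE : Real.exp 1 ^ j = Real.exp j := by rw [← Real.exp_nat_mul, mul_one]
        rw [inv_pow]
        field_simp
        rw [show (2*Real.exp 1*s*(N:ℝ))^j = 2^j * Real.exp 1^j * s^j * (N:ℝ)^j by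
          rw [mul_pow, mul_pow, mul_pow], hE]
        ring


lemma sum_F_eq {M : Type*} [AddCommMonoid M] (N k : ℕ) (hk1 : 1 ≤ k) (hkN : k ≤ N) (f : ℕ → M) :
    ∑ i ∈ Finset.univ.filter (fun i : Fin N => k ≤ (i : ℕ) + 1), f ((i : ℕ) + 1)
      = ∑ j ∈ Finset.Icc k N, f j := by
  apply Finset.sum_nbij' (i := fun i : Fin N => (i : ℕ) + 1)
    (j := fun j => (⟨min (j - 1) (N - 1), by omega⟩ : Fin N))
  · intro a ha
    rw [Finset.mem_filter] at ha
    rw [Finset.mem_Icc]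
    have := a.isLt
    omega
  · intro a ha
    rw [Finset.mem_Icc] at ha
    rw [Finset.mem_filter]
    refine ⟨Finset.mem_univ _, ?_⟩
    simp only []
    omega
  · intro a ha
    rw [Finset.mem_filter] at ha
    apply Fin.ext
    have := a.isLt
    simp only []
    omega
  · intro a ha
    rw [Finset.mem_Icc] at ha
    simp only []
    omega
  · intro a ha
    rfl

lemma half_sum_le (k N : ℕ) (hk1 : 1 ≤ k) : ∑ j ∈ Finset.Icc k N, ((2:ℝ)⁻¹) ^ j ≤ 1 := by
  have key : ∀ M : ℕ, ∑ j ∈ Finset.Icc 1 M, ((2:ℝ)⁻¹) ^ j = 1 - 2⁻¹ ^ M := by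
    intro M
    induction M with
    | zero => simp
    | succ M ih =>
      rw [← Finset.insert_Icc_right_eq_Icc_add_one (by omega), Finset.sum_insert (by simp)]
      rw [ih, pow_succ]
      ring
  calc ∑ j ∈ Finset.Icc k N, ((2:ℝ)⁻¹) ^ j
      ≤ ∑ j ∈ Finset.Icc 1 N, ((2:ℝ)⁻¹) ^ j := by
        apply Finset.sum_le_sum_of_subset_of_nonneg (Finset.Icc_subset_Icc hk1 le_rfl)
        intro i _ _
        positivity
    _ = 1 - 2⁻¹ ^ N := key N
    _ ≤ 1 := by
        have : (0:ℝ) ≤ 2⁻¹ ^ N := by positivity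
        linarith

lemma log_succ_ge (N : ℕ) (hN : 1 ≤ N) :
    ((N:ℝ) + 1)⁻¹ ≤ Real.log ((N:ℝ) + 1) - Real.log N := by
  have hNpos : (0:ℝ) < N := by exact_mod_cast hN
  have h := Real.log_le_sub_one_of_pos (show (0:ℝ) < (N:ℝ)/((N:ℝ)+1) by positivity)
  rw [Real.log_div (by positivity) (by positivity)] at h
  have h2 : (N:ℝ)/((N:ℝ)+1) - 1 = -(((N:ℝ)+1)⁻¹) := by field_simp; ring
  linarith

lemma harmonic_le (k : ℕ) (hk1 : 1 ≤ k) :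
    ∀ N : ℕ, k ≤ N → ∑ j ∈ Finset.Icc k N, ((j:ℝ))⁻¹ ≤ 1 + Real.log N - Real.log k := by
  intro N
  induction N with
  | zero => intro h; omega
  | succ N ih =>
    intro hkN
    rcases Nat.lt_or_ge N k with h | h
    · have hk : k = N + 1 := by omega
      subst hk
      rw [Finset.Icc_self, Finset.sum_singleton]
      have h1 : ((N:ℝ)+1)⁻¹ ≤ 1 := by
        rw [inv_le_one_iff₀]
        right
        have : (0:ℝ) ≤ N := by positivity
        linarith
      push_cast
      linarith
    · have hN1 : 1 ≤ N := le_trans hk1 h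
      have step := log_succ_ge N hN1
      rw [← Finset.insert_Icc_right_eq_Icc_add_one (by omega), Finset.sum_insert (by simp)]
      have := ih h
      push_cast
      push_cast at this
      linarith

theorem stmt4 {Ω : Type*} [MeasurableSpace Ω] (μ : Measure Ω) [IsProbabilityMeasure μ]
    (N : ℕ) (Z : Fin N → Ω → ℝ)
    (hmeas : ∀ i, Measurable (Z i))
    (hindep : iIndepFun Z μ)
    (hnonneg : ∀ i ω, 0 ≤ Z i ω)
    (htail : ∀ i, ∀ t : ℝ, 1 ≤ t → μ {ω | t ≤ Z i ω} ≤ ENNReal.ofReal t⁻¹)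
    (s : ℝ) (hs : 1 < s) (k : ℕ) (hk1 : 1 ≤ k) (hkN : k ≤ N) :
    1 - ENNReal.ofReal (s⁻¹ ^ k) ≤
      μ {ω | ∑ i ∈ Finset.univ.filter (fun i : Fin N => k ≤ (i : ℕ) + 1),
              orderStat (fun j => Z j ω) i
            ≤ 2 * Real.exp 1 * s * (N : ℝ) * Real.log (Real.exp 1 * N / k)} := by
  classical
  have he2 : (2:ℝ) ≤ Real.exp 1 := by
    have := Real.add_one_le_exp 1; linarith
  have hepos : (0:ℝ) < Real.exp 1 := Real.exp_pos 1
  have hspos : (0:ℝ) < s := lt_trans one_pos hs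
  have hN1 : 1 ≤ N := le_trans hk1 hkN
  have hNpos : (0:ℝ) < N := by exact_mod_cast hN1
  have hkpos : (0:ℝ) < k := by exact_mod_cast hk1
  set F : Finset (Fin N) := Finset.univ.filter (fun i : Fin N => k ≤ (i : ℕ) + 1) with hF
  set t : Fin N → ℝ := fun i => 2 * Real.exp 1 * s * N / ((i:ℕ)+1) with ht
  set bad : Set Ω := ⋃ i ∈ F, {ω | t i ≤ orderStat (fun l => Z l ω) i} with hbad
  -- each threshold is at least 1
  have ht1 : ∀ i : Fin N, 1 ≤ t i := by
    intro i
    have hi : ((i:ℕ):ℝ) + 1 ≤ N := by exact_mod_cast i.isLt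
    rw [ht]
    rw [le_div_iff₀ (by positivity)]
    have hes : (2:ℝ) ≤ Real.exp 1 * s := by nlinarith
    nlinarith [mul_le_mul_of_nonneg_right hes (le_of_lt hNpos)]
  -- probability of each bad event
  have hstep2 : ∀ i ∈ F, μ {ω | t i ≤ orderStat (fun l => Z l ω) i}
      ≤ ENNReal.ofReal (((2*s)⁻¹) ^ ((i:ℕ)+1)) := by
    intro i hi
    have hsub : {ω | t i ≤ orderStat (fun l => Z l ω) i} ⊆
        ⋃ S ∈ Finset.univ.powersetCard ((i:ℕ)+1), ⋂ l ∈ (S : Finset (Fin N)), {ω | t i ≤ Z l ω} := by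
      intro ω hω
      rw [Set.mem_setOf_eq, le_orderStat_iff, Fintype.card_subtype] at hω
      obtain ⟨S, hSsub, hScard⟩ := Finset.exists_subset_card_eq hω
      refine Set.mem_iUnion₂.mpr ⟨S, Finset.mem_powersetCard.mpr ⟨Finset.subset_univ _, hScard⟩, ?_⟩
      exact Set.mem_iInter₂.mpr fun l hl => (Finset.mem_filter.mp (hSsub hl)).2
    calc μ {ω | t i ≤ orderStat (fun l => Z l ω) i}
        ≤ μ (⋃ S ∈ Finset.univ.powersetCard ((i:ℕ)+1),
              ⋂ l ∈ (S : Finset (Fin N)), {ω | t i ≤ Z l ω}) := measure_mono hsub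
      _ ≤ ∑ S ∈ Finset.univ.powersetCard ((i:ℕ)+1),
            μ (⋂ l ∈ (S : Finset (Fin N)), {ω | t i ≤ Z l ω}) := measure_biUnion_finset_le _ _
      _ = ∑ S ∈ Finset.univ.powersetCard ((i:ℕ)+1),
            ∏ l ∈ S, μ {ω | t i ≤ Z l ω} := by
          refine Finset.sum_congr rfl fun S hS => ?_
          exact hindep.meas_biInter fun l _ => ⟨Set.Ici (t i), measurableSet_Ici, rfl⟩
      _ ≤ ∑ S ∈ Finset.univ.powersetCard ((i:ℕ)+1),
            ∏ l ∈ S, ENNReal.ofReal (t i)⁻¹ := by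
          refine Finset.sum_le_sum fun S hS => Finset.prod_le_prod' fun l _ => ?_
          exact htail l (t i) (ht1 i)
      _ = ∑ S ∈ Finset.univ.powersetCard ((i:ℕ)+1),
            ENNReal.ofReal ((t i)⁻¹) ^ ((i:ℕ)+1) := by
          refine Finset.sum_congr rfl fun S hS => ?_
          rw [Finset.prod_const, (Finset.mem_powersetCard.mp hS).2]
      _ = (N.choose ((i:ℕ)+1) : ℝ≥0∞) * ENNReal.ofReal ((t i)⁻¹) ^ ((i:ℕ)+1) := by
          rw [Finset.sum_const, Finset.card_powersetCard, Finset.card_univ, Fintype.card_fin,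
            nsmul_eq_mul]
      _ ≤ ENNReal.ofReal (((2*s)⁻¹) ^ ((i:ℕ)+1)) := by
          have htpos : (0:ℝ) ≤ (t i)⁻¹ := by
            have := ht1 i; positivity
          rw [← ENNReal.ofReal_pow htpos, ← ENNReal.ofReal_natCast,
            ← ENNReal.ofReal_mul (by positivity)]
          apply ENNReal.ofReal_le_ofReal
          have hiN : (i:ℕ) + 1 ≤ N := i.isLt
          have hcb := choose_bound_s4 N ((i:ℕ)+1) s hs (by omega) hiN
          push_cast at hcb ⊢
          exact hcb
  -- total bad probability
  have hbadle : μ bad ≤ ENNReal.ofReal (s⁻¹ ^ k) := by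
    calc μ bad ≤ ∑ i ∈ F, μ {ω | t i ≤ orderStat (fun l => Z l ω) i} :=
          measure_biUnion_finset_le _ _
      _ ≤ ∑ i ∈ F, ENNReal.ofReal (((2*s)⁻¹) ^ ((i:ℕ)+1)) := Finset.sum_le_sum hstep2
      _ = ENNReal.ofReal (∑ i ∈ F, ((2*s)⁻¹) ^ ((i:ℕ)+1)) := by
          rw [ENNReal.ofReal_sum_of_nonneg (fun i _ => by positivity)]
      _ ≤ ENNReal.ofReal (s⁻¹ ^ k) := by
          apply ENNReal.ofReal_le_ofReal
          have heq : ∑ i ∈ F, ((2*s)⁻¹) ^ ((i:ℕ)+1) = ∑ j ∈ Finset.Icc k N, ((2*s)⁻¹) ^ j :=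
            sum_F_eq N k hk1 hkN (fun j => ((2*s)⁻¹) ^ j)
          rw [heq]
          have hsinv1 : s⁻¹ ≤ 1 := by
            rw [inv_le_one_iff₀]; right; linarith
          have hsinv0 : (0:ℝ) ≤ s⁻¹ := by positivity
          calc ∑ j ∈ Finset.Icc k N, ((2*s)⁻¹) ^ j
              = ∑ j ∈ Finset.Icc k N, (2:ℝ)⁻¹ ^ j * s⁻¹ ^ j := by
                refine Finset.sum_congr rfl fun j _ => ?_
                rw [mul_inv, mul_pow]
            _ ≤ ∑ j ∈ Finset.Icc k N, (2:ℝ)⁻¹ ^ j * s⁻¹ ^ k := by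
                refine Finset.sum_le_sum fun j hj => ?_
                have hjk : k ≤ j := (Finset.mem_Icc.mp hj).1
                refine mul_le_mul_of_nonneg_left ?_ (by positivity)
                exact pow_le_pow_of_le_one hsinv0 hsinv1 hjk
            _ = (∑ j ∈ Finset.Icc k N, (2:ℝ)⁻¹ ^ j) * s⁻¹ ^ k := by
                rw [← Finset.sum_mul]
            _ ≤ 1 * s⁻¹ ^ k := by
                refine mul_le_mul_of_nonneg_right (half_sum_le k N hk1) (by positivity)
            _ = s⁻¹ ^ k := one_mul _
  -- the good event
  have hgood : badᶜ ⊆ {ω | ∑ i ∈ Finset.univ.filter (fun i : Fin N => k ≤ (i : ℕ) + 1),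
              orderStat (fun j => Z j ω) i
            ≤ 2 * Real.exp 1 * s * (N : ℝ) * Real.log (Real.exp 1 * N / k)} := by
    intro ω hω
    rw [Set.mem_compl_iff, hbad, Set.mem_iUnion₂] at hω
    push_neg at hω
    rw [Set.mem_setOf_eq]
    have hlog : Real.log (Real.exp 1 * N / k) = 1 + Real.log N - Real.log k := by
      rw [Real.log_div (by positivity) (by positivity), Real.log_mul (by positivity) (by positivity),
        Real.log_exp]
      try ring
    calc ∑ i ∈ F, orderStat (fun l => Z l ω) i
        ≤ ∑ i ∈ F, t i := by
          refine Finset.sum_le_sum fun i hi => ?_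
          exact le_of_lt (lt_of_not_ge (hω i hi))
      _ = 2 * Real.exp 1 * s * N * ∑ i ∈ F, (((i:ℕ):ℝ)+1)⁻¹ := by
          rw [Finset.mul_sum]
          refine Finset.sum_congr rfl fun i _ => ?_
          simp only [ht]
          rw [div_eq_mul_inv]
      _ ≤ 2 * Real.exp 1 * s * N * (1 + Real.log N - Real.log k) := by
          refine mul_le_mul_of_nonneg_left ?_ (by positivity)
          have heq : ∑ i ∈ F, (((i:ℕ):ℝ)+1)⁻¹ = ∑ j ∈ Finset.Icc k N, ((j:ℝ))⁻¹ := by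
            have := sum_F_eq N k hk1 hkN (fun j => ((j:ℝ))⁻¹)
            rw [← this]
            refine Finset.sum_congr rfl fun i _ => ?_
            push_cast
            ring_nf
          rw [heq]
          exact harmonic_le k hk1 N hkN
      _ = 2 * Real.exp 1 * s * (N : ℝ) * Real.log (Real.exp 1 * N / k) := by
          rw [hlog]
  -- conclusion
  rw [tsub_le_iff_right]
  calc (1:ℝ≥0∞) = μ Set.univ := measure_univ.symm
    _ ≤ μ ({ω | ∑ i ∈ Finset.univ.filter (fun i : Fin N => k ≤ (i : ℕ) + 1),
              orderStat (fun j => Z j ω) i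
            ≤ 2 * Real.exp 1 * s * (N : ℝ) * Real.log (Real.exp 1 * N / k)} ∪ bad) := by
        apply measure_mono
        intro ω _
        by_cases hω : ω ∈ bad
        · exact Or.inr hω
        · exact Or.inl (hgood hω)
    _ ≤ μ {ω | ∑ i ∈ Finset.univ.filter (fun i : Fin N => k ≤ (i : ℕ) + 1),
              orderStat (fun j => Z j ω) i
            ≤ 2 * Real.exp 1 * s * (N : ℝ) * Real.log (Real.exp 1 * N / k)} + μ bad :=
        measure_union_le _ _
    _ ≤ μ {ω | ∑ i ∈ Finset.univ.filter (fun i : Fin N => k ≤ (i : ℕ) + 1),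
              orderStat (fun j => Z j ω) i
            ≤ 2 * Real.exp 1 * s * (N : ℝ) * Real.log (Real.exp 1 * N / k)} +
          ENNReal.ofReal (s⁻¹ ^ k) := add_le_add_right hbadle _
end

section
/- Let $q>1$ and let $Z_1,\dots,Z_N$ be independent nonnegative random variables satisfying $\mathbb{P}(Z_i \ge t) \le t^{-q}$ for all $t\ge 1$ and all $i$. Then for every $s>1$ and $1\le k\le N$, with probability at least $1-s^{-k}$, $\sum_{i=k}^N Z_i^* \le \frac{12 q (es)^{1/q}}{q-1} N$, where $(Z_i^*)$ is the nonincreasing rearrangement of $(Z_i)$. -/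
/-!
Compare the `i`-th largest value with the threshold `τᵢ = (2esN / i) ^ (1/q)`. If `Z*ᵢ ≥ τᵢ`, then
at least `i` of the `Zⱼ` exceed `τᵢ`; by independence and the tail bound this has probability at
most `C(N, i) τᵢ^(-q i) = C(N, i) (i / 2esN)^i ≤ (2s)^(-i)`, because `C(N, i) i^i ≤ (eN)^i`. Summing
over `i ≥ k`, some `Z*ᵢ` with `i ≥ k` exceeds its threshold with probability at most `s^(-k)`.
Otherwise `∑_{i ≥ k} Z*ᵢ ≤ ∑ᵢ τᵢ ≤ q/(q-1) (2es)^(1/q) N`, by telescoping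
`(1 - a) (x + 1)^(-a) ≤ (x + 1)^(1-a) - x^(1-a)` with `a = 1/q`.
-/

open MeasureTheory ProbabilityTheory Finset
open scoped ENNReal

open Real
open scoped Nat

lemma pow_le_exp_one_pow_mul_factorial (r : ℕ) : (r : ℝ) ^ r ≤ exp 1 ^ r * r ! := by
  rw [exp_one_pow, ← div_le_iff₀ (by positivity)]
  exact pow_div_factorial_le_exp _ r.cast_nonneg r

lemma choose_mul_pow_self_le (n r : ℕ) : (n.choose r : ℝ) * r ^ r ≤ (exp 1 * n) ^ r :=
  calc (n.choose r : ℝ) * r ^ r ≤ n ^ r / r ! * (exp 1 ^ r * r !) := by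
        gcongr
        · exact Nat.choose_le_pow_div r n
        · exact pow_le_exp_one_pow_mul_factorial r
    _ = (exp 1 * n) ^ r := by field_simp; ring

lemma one_sub_mul_rpow_neg_le_sub {a x : ℝ} (ha₀ : 0 ≤ a) (ha₁ : a ≤ 1) (hx : 0 ≤ x) :
    (1 - a) * (x + 1) ^ (-a) ≤ (x + 1) ^ (1 - a) - x ^ (1 - a) := by
  have hx₁ : 0 < x + 1 := by linarith
  have amgm : x ^ (1 - a) * (x + 1) ^ a ≤ (1 - a) * x + a * (x + 1) :=
    geom_mean_le_arith_mean2_weighted (by linarith) ha₀ hx hx₁.le (by ring)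
  have hsplit : (x + 1) ^ (1 - a) = (x + 1) * (x + 1) ^ (-a) := by
    rw [sub_eq_add_neg, rpow_add hx₁, rpow_one]
  have hcancel : (x + 1) ^ a * (x + 1) ^ (-a) = 1 := by
    rw [← rpow_add hx₁, add_neg_cancel, rpow_zero]
  have hx_eq : x ^ (1 - a) = x ^ (1 - a) * (x + 1) ^ a * (x + 1) ^ (-a) := by
    rw [mul_assoc, hcancel, mul_one]
  have hpos : 0 ≤ (x + 1) ^ (-a) := by positivity
  rw [hsplit, hx_eq]
  nlinarith [mul_le_mul_of_nonneg_right amgm hpos]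

lemma one_sub_mul_sum_range_rpow_neg_le {a : ℝ} (ha₀ : 0 ≤ a) (ha₁ : a ≤ 1) (n : ℕ) :
    (1 - a) * ∑ i ∈ range n, ((i : ℝ) + 1) ^ (-a) ≤ (n : ℝ) ^ (1 - a) :=
  calc (1 - a) * ∑ i ∈ range n, ((i : ℝ) + 1) ^ (-a)
      ≤ ∑ i ∈ range n, ((((i + 1 : ℕ) : ℝ)) ^ (1 - a) - (i : ℝ) ^ (1 - a)) := by
        rw [mul_sum]
        gcongr with i
        push_cast
        exact one_sub_mul_rpow_neg_le_sub ha₀ ha₁ i.cast_nonneg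
    _ ≤ (n : ℝ) ^ (1 - a) := by
        rw [sum_range_sub (fun i : ℕ => (i : ℝ) ^ (1 - a))]
        exact sub_le_self _ (by positivity)

lemma sum_range_div_rpow_le {q D : ℝ} (hq : 1 < q) (hD : 0 ≤ D) (n : ℕ) :
    ∑ i ∈ range n, (D / ((i : ℝ) + 1)) ^ (1 / q) ≤ q / (q - 1) * D ^ (1 / q) * n ^ (1 - 1 / q) := by
  have hq₀ : 0 < q := by linarith
  have hq₁ : 0 < q - 1 := by linarith
  have hexp : 1 - 1 / q = (q - 1) / q := by field_simp
  have key := one_sub_mul_sum_range_rpow_neg_le (a := 1 / q) (by positivity)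
    (div_le_one_of_le₀ hq.le hq₀.le) n
  rw [hexp, ← le_div_iff₀' (by positivity), div_div_eq_mul_div, ← hexp] at key
  calc ∑ i ∈ range n, (D / ((i : ℝ) + 1)) ^ (1 / q)
      = D ^ (1 / q) * ∑ i ∈ range n, ((i : ℝ) + 1) ^ (-(1 / q)) := by
        rw [mul_sum]
        refine sum_congr rfl fun i _ => ?_
        rw [div_rpow hD (by positivity), rpow_neg (by positivity), div_eq_mul_inv]
    _ ≤ D ^ (1 / q) * ((n : ℝ) ^ (1 - 1 / q) * q / (q - 1)) := by gcongr
    _ = q / (q - 1) * D ^ (1 / q) * n ^ (1 - 1 / q) := by ring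

lemma sum_filter_div_rpow_le {q : ℝ} (hq : 1 < q) {s : ℝ} (hs : 0 ≤ s) (N k : ℕ) :
    ∑ i ∈ univ.filter (fun i : Fin N => k ≤ (i : ℕ) + 1),
        (2 * exp 1 * s * N / ((i : ℕ) + 1)) ^ (1 / q) ≤
      12 * q * (exp 1 * s) ^ (1 / q) / (q - 1) * N := by
  have hq₁ : 0 < q - 1 := by linarith
  have htwo : (2 : ℝ) ^ (1 / q) ≤ 12 := by
    calc (2 : ℝ) ^ (1 / q) ≤ 2 ^ (1 : ℝ) :=
          rpow_le_rpow_of_exponent_le (by norm_num) (div_le_one_of_le₀ hq.le (by linarith))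
      _ ≤ 12 := by norm_num
  calc _ ≤ ∑ i : Fin N, (2 * exp 1 * s * N / ((i : ℕ) + 1)) ^ (1 / q) :=
        sum_le_sum_of_subset_of_nonneg (filter_subset _ _) fun _ _ _ => by positivity
    _ = ∑ i ∈ range N, (2 * exp 1 * s * N / ((i : ℝ) + 1)) ^ (1 / q) :=
        Fin.sum_univ_eq_sum_range (fun i => (2 * exp 1 * s * N / ((i : ℝ) + 1)) ^ (1 / q)) N
    _ ≤ q / (q - 1) * (2 * exp 1 * s * N) ^ (1 / q) * N ^ (1 - 1 / q) :=
        sum_range_div_rpow_le hq (by positivity) N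
    _ = 2 ^ (1 / q) * (q * (exp 1 * s) ^ (1 / q) / (q - 1) * N) := by
        rw [show 2 * exp 1 * s * N = 2 * (exp 1 * s) * N by ring,
          mul_rpow (by positivity) (by positivity), mul_rpow (by norm_num) (by positivity)]
        have hN : (N : ℝ) ^ (1 / q) * N ^ (1 - 1 / q) = N := by
          rw [← rpow_add' (by positivity) (by norm_num), add_sub_cancel, rpow_one]
        linear_combination (q / (q - 1) * 2 ^ (1 / q) * (exp 1 * s) ^ (1 / q)) * hN
    _ ≤ 12 * (q * (exp 1 * s) ^ (1 / q) / (q - 1) * N) := by gcongr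
    _ = 12 * q * (exp 1 * s) ^ (1 / q) / (q - 1) * N := by ring

lemma sum_filter_succ_le_sum_Ico {g : ℕ → ℝ} (hg : ∀ r, 0 ≤ g r) (N k : ℕ) :
    ∑ i ∈ univ.filter (fun i : Fin N => k ≤ (i : ℕ) + 1), g ((i : ℕ) + 1) ≤
      ∑ r ∈ Ico k (N + 1), g r := by
  rw [← sum_image (g := fun i : Fin N => (i : ℕ) + 1) fun i _ j _ h => Fin.ext (by simpa using h)]
  refine sum_le_sum_of_subset_of_nonneg ?_ fun r _ _ => hg r
  intro r
  simp only [mem_image, mem_filter, mem_univ, true_and, mem_Ico]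
  rintro ⟨i, hi, rfl⟩
  omega

lemma sum_filter_inv_two_mul_pow_le {s : ℝ} (hs : 1 ≤ s) {k : ℕ} (hk : 1 ≤ k) (N : ℕ) :
    ∑ i ∈ univ.filter (fun i : Fin N => k ≤ (i : ℕ) + 1), (2 * s)⁻¹ ^ ((i : ℕ) + 1) ≤ s⁻¹ ^ k := by
  set x := (2 * s)⁻¹
  have hx₀ : 0 ≤ x := by positivity
  have hx₁ : x ≤ 1 / 2 := by
    rw [one_div]; exact inv_anti₀ two_pos (by linarith)
  have hhalf : (2 : ℝ) * 2⁻¹ ^ k ≤ 1 := by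
    linarith [pow_le_of_le_one (by norm_num : (0 : ℝ) ≤ 2⁻¹) (by norm_num) (by omega : k ≠ 0)]
  calc ∑ i ∈ univ.filter (fun i : Fin N => k ≤ (i : ℕ) + 1), x ^ ((i : ℕ) + 1)
      ≤ ∑ r ∈ Ico k (N + 1), x ^ r := sum_filter_succ_le_sum_Ico (fun r => by positivity) N k
    _ ≤ x ^ k / (1 - x) := geom_sum_Ico_le_of_lt_one hx₀ (by linarith)
    _ ≤ 2 * x ^ k := by
        rw [div_le_iff₀ (by linarith)]
        nlinarith [pow_nonneg hx₀ k]
    _ = 2 * 2⁻¹ ^ k * s⁻¹ ^ k := by rw [mul_assoc, ← mul_pow, ← mul_inv]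
    _ ≤ s⁻¹ ^ k := mul_le_of_le_one_left (by positivity) hhalf

lemma choose_mul_div_pow_le {N : ℕ} (hN : N ≠ 0) (r : ℕ) {s : ℝ} (hs : 0 < s) :
    (N.choose r : ℝ) * (r / (2 * exp 1 * s * N)) ^ r ≤ (2 * s)⁻¹ ^ r := by
  calc (N.choose r : ℝ) * (r / (2 * exp 1 * s * N)) ^ r
      = (N.choose r : ℝ) * r ^ r / (2 * exp 1 * s * N) ^ r := by rw [div_pow, mul_div_assoc]
    _ ≤ (exp 1 * N) ^ r / (2 * exp 1 * s * N) ^ r := by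
        gcongr; exact choose_mul_pow_self_le N r
    _ = (2 * s)⁻¹ ^ r := by
        rw [← div_pow]; congr 1; field_simp

lemma succ_le_card_filter_of_le_orderStat {N : ℕ} (v : Fin N → ℝ) (i : Fin N) {t : ℝ}
    (h : t ≤ orderStat v i) : (i : ℕ) + 1 ≤ #{j | t ≤ v j} := by
  set σ := Tuple.sort v
  have hmono : Monotone (v ∘ σ) := Tuple.monotone_sort v
  calc (i : ℕ) + 1 = #((Ici i.rev).image σ) := by
        rw [card_image_of_injective _ σ.injective, Fin.card_Ici, Fin.val_rev]
        omega
    _ ≤ #{j | t ≤ v j} := by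
        refine card_le_card fun j hj => ?_
        obtain ⟨m, hm, rfl⟩ := mem_image.mp hj
        exact mem_filter.mpr ⟨mem_univ _, h.trans (hmono (mem_Ici.mp hm))⟩

section

variable {Ω : Type*} [MeasurableSpace Ω] {μ : Measure Ω}

open Classical in
lemma ProbabilityTheory.iIndepFun.measure_le_card_filter_mem_le {ι β : Type*} [Fintype ι]
    [MeasurableSpace β] {Z : ι → Ω → β} (hZ : iIndepFun Z μ) {S : Set β} (hS : MeasurableSet S)
    {p : ℝ≥0∞} (hp : ∀ j, μ (Z j ⁻¹' S) ≤ p) (r : ℕ) :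
    μ {ω | r ≤ #{j | Z j ω ∈ S}} ≤ (Fintype.card ι).choose r * p ^ r := by
  have hcover : {ω | r ≤ #{j | Z j ω ∈ S}} ⊆ ⋃ J ∈ powersetCard r univ, ⋂ j ∈ J, Z j ⁻¹' S := by
    intro ω hω
    obtain ⟨J, hJ, hcard⟩ := exists_subset_card_eq hω
    simp only [Set.mem_iUnion, Set.mem_iInter, Set.mem_preimage, mem_powersetCard]
    exact ⟨J, ⟨subset_univ J, hcard⟩, fun j hj => (mem_filter.mp (hJ hj)).2⟩
  calc μ {ω | r ≤ #{j | Z j ω ∈ S}}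
      ≤ ∑ J ∈ powersetCard r univ, μ (⋂ j ∈ J, Z j ⁻¹' S) :=
        (measure_mono hcover).trans (measure_biUnion_finset_le _ _)
    _ ≤ ∑ J ∈ powersetCard r (univ : Finset ι), p ^ r := by
        gcongr with J hJ
        rw [hZ.measure_inter_preimage_eq_mul J (sets := fun _ => S) fun _ _ => hS,
          ← (mem_powersetCard.mp hJ).2]
        exact prod_le_pow_card _ _ _ fun j _ => hp j
    _ = (Fintype.card ι).choose r * p ^ r := by
        rw [sum_const, card_powersetCard, Finset.card_univ, nsmul_eq_mul]

lemma measure_le_orderStat_le {N : ℕ} {Z : Fin N → Ω → ℝ} (hZ : iIndepFun Z μ) (i : Fin N)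
    {t : ℝ} {p : ℝ≥0∞} (hp : ∀ j, μ {ω | t ≤ Z j ω} ≤ p) :
    μ {ω | t ≤ orderStat (fun j => Z j ω) i} ≤ N.choose (i + 1) * p ^ ((i : ℕ) + 1) := by
  classical
  calc μ {ω | t ≤ orderStat (fun j => Z j ω) i}
      ≤ μ {ω | (i : ℕ) + 1 ≤ #{j | Z j ω ∈ Set.Ici t}} := by
        refine measure_mono fun ω hω => ?_
        simpa only [Set.mem_ofPred_eq, Set.mem_Ici] using succ_le_card_filter_of_le_orderStat _ i hω
    _ ≤ N.choose (i + 1) * p ^ ((i : ℕ) + 1) := by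
        simpa using hZ.measure_le_card_filter_mem_le measurableSet_Ici hp ((i : ℕ) + 1)

lemma measure_sum_lt_sum_orderStat_le {N : ℕ} {Z : Fin N → Ω → ℝ} (hZ : iIndepFun Z μ)
    (F : Finset (Fin N)) (τ : Fin N → ℝ) (p : Fin N → ℝ≥0∞)
    (hp : ∀ i j, μ {ω | τ i ≤ Z j ω} ≤ p i) :
    μ {ω | ∑ i ∈ F, τ i < ∑ i ∈ F, orderStat (fun j => Z j ω) i} ≤
      ∑ i ∈ F, N.choose (i + 1) * p i ^ ((i : ℕ) + 1) := by
  have hcover : {ω | ∑ i ∈ F, τ i < ∑ i ∈ F, orderStat (fun j => Z j ω) i} ⊆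
      ⋃ i ∈ F, {ω | τ i ≤ orderStat (fun j => Z j ω) i} := by
    intro ω hω
    obtain ⟨i, hi, hlt⟩ := exists_lt_of_sum_lt (show ∑ i ∈ F, τ i < _ from hω)
    exact Set.mem_biUnion hi hlt.le
  calc _ ≤ ∑ i ∈ F, μ {ω | τ i ≤ orderStat (fun j => Z j ω) i} :=
        (measure_mono hcover).trans (measure_biUnion_finset_le _ _)
    _ ≤ _ := sum_le_sum fun i _ => measure_le_orderStat_le hZ i (hp i)

lemma measure_sum_threshold_lt_sum_orderStat_le {N : ℕ} {Z : Fin N → Ω → ℝ} (hZ : iIndepFun Z μ)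
    {q : ℝ} (hq : 0 < q)
    (htail : ∀ i, ∀ t : ℝ, 1 ≤ t → μ {ω | t ≤ Z i ω} ≤ ENNReal.ofReal (t ^ (-q)))
    {s : ℝ} (hs : 1 ≤ s) {k : ℕ} (hk : 1 ≤ k) :
    μ {ω | ∑ i ∈ univ.filter (fun i : Fin N => k ≤ (i : ℕ) + 1),
          (2 * exp 1 * s * N / ((i : ℕ) + 1)) ^ (1 / q) <
        ∑ i ∈ univ.filter (fun i : Fin N => k ≤ (i : ℕ) + 1), orderStat (fun j => Z j ω) i} ≤
      ENNReal.ofReal (s⁻¹ ^ k) := by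
  set D := 2 * exp 1 * s * N
  refine (measure_sum_lt_sum_orderStat_le hZ _ _ (fun i => ENNReal.ofReal (((i : ℕ) + 1) / D))
    fun i j => ?_).trans ?_
  · have hN : (0 : ℝ) < N := by exact_mod_cast i.pos
    have hi : ((i : ℕ) : ℝ) + 1 ≤ N := by exact_mod_cast i.isLt
    have hτ : 1 ≤ (D / ((i : ℕ) + 1)) ^ (1 / q) := by
      refine one_le_rpow ?_ (by positivity)
      rw [le_div_iff₀ (by positivity), one_mul]
      have hsD : 1 ≤ 2 * exp 1 * s := by nlinarith [add_one_le_exp 1]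
      exact hi.trans (le_mul_of_one_le_left hN.le hsD)
    calc μ {ω | (D / ((i : ℕ) + 1)) ^ (1 / q) ≤ Z j ω}
        ≤ ENNReal.ofReal (((D / ((i : ℕ) + 1)) ^ (1 / q)) ^ (-q)) := htail j _ hτ
      _ = ENNReal.ofReal (((i : ℕ) + 1) / D) := by
        rw [← rpow_mul (by positivity), one_div_mul_eq_div, neg_div, div_self hq.ne', rpow_neg_one,
          inv_div]
  · calc _ ≤ ∑ i ∈ univ.filter (fun i : Fin N => k ≤ (i : ℕ) + 1),
            ENNReal.ofReal ((2 * s)⁻¹ ^ ((i : ℕ) + 1)) := by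
          refine sum_le_sum fun i _ => ?_
          rw [← ENNReal.ofReal_pow (by positivity), ← ENNReal.ofReal_natCast,
            ← ENNReal.ofReal_mul (by positivity)]
          refine ENNReal.ofReal_le_ofReal ?_
          simpa using choose_mul_div_pow_le i.pos.ne' ((i : ℕ) + 1) (by linarith : 0 < s)
      _ ≤ ENNReal.ofReal (s⁻¹ ^ k) := by
          rw [← ENNReal.ofReal_sum_of_nonneg fun _ _ => by positivity]
          exact ENNReal.ofReal_le_ofReal (sum_filter_inv_two_mul_pow_le hs hk N)

end

theorem stmt5_general {Ω : Type*} [MeasurableSpace Ω] (μ : Measure Ω) [IsProbabilityMeasure μ]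
    (N : ℕ) (q : ℝ) (hq : 1 < q) (Z : Fin N → Ω → ℝ)
    (hindep : iIndepFun Z μ)
    (htail : ∀ i, ∀ t : ℝ, 1 ≤ t → μ {ω | t ≤ Z i ω} ≤ ENNReal.ofReal (t ^ (-q)))
    (s : ℝ) (hs : 1 < s) (k : ℕ) (hk1 : 1 ≤ k) :
    1 - ENNReal.ofReal (s⁻¹ ^ k) ≤
      μ {ω | ∑ i ∈ Finset.univ.filter (fun i : Fin N => k ≤ (i : ℕ) + 1),
              orderStat (fun j => Z j ω) i
            ≤ 12 * q * (Real.exp 1 * s) ^ (1/q) / (q - 1) * (N : ℝ)} := by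
  set F := univ.filter (fun i : Fin N => k ≤ (i : ℕ) + 1)
  set bad := {ω | ∑ i ∈ F, (2 * exp 1 * s * N / ((i : ℕ) + 1)) ^ (1 / q) <
    ∑ i ∈ F, orderStat (fun j => Z j ω) i}
  have hbad : μ bad ≤ ENNReal.ofReal (s⁻¹ ^ k) :=
    measure_sum_threshold_lt_sum_orderStat_le hindep (by linarith) htail hs.le hk1
  have hgood : Set.univ \ bad ⊆
      {ω | ∑ i ∈ F, orderStat (fun j => Z j ω) i ≤ 12 * q * (exp 1 * s) ^ (1 / q) / (q - 1) * N} :=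
    fun ω hω => (not_lt.mp hω.2).trans (sum_filter_div_rpow_le hq (by linarith) N k)
  calc 1 - ENNReal.ofReal (s⁻¹ ^ k) ≤ μ Set.univ - μ bad := by rw [measure_univ]; gcongr
    _ ≤ μ (Set.univ \ bad) := le_measure_sdiff
    _ ≤ _ := measure_mono hgood

theorem stmt5 {Ω : Type*} [MeasurableSpace Ω] (μ : Measure Ω) [IsProbabilityMeasure μ]
    (N : ℕ) (q : ℝ) (hq : 1 < q) (Z : Fin N → Ω → ℝ)
    (hmeas : ∀ i, Measurable (Z i))
    (hindep : iIndepFun Z μ)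
    (hnonneg : ∀ i ω, 0 ≤ Z i ω)
    (htail : ∀ i, ∀ t : ℝ, 1 ≤ t → μ {ω | t ≤ Z i ω} ≤ ENNReal.ofReal (t ^ (-q)))
    (s : ℝ) (hs : 1 < s) (k : ℕ) (hk1 : 1 ≤ k) (hkN : k ≤ N) :
    1 - ENNReal.ofReal (s⁻¹ ^ k) ≤
      μ {ω | ∑ i ∈ Finset.univ.filter (fun i : Fin N => k ≤ (i : ℕ) + 1),
              orderStat (fun j => Z j ω) i
            ≤ 12 * q * (Real.exp 1 * s) ^ (1/q) / (q - 1) * (N : ℝ)} :=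
  stmt5_general μ N q hq Z hindep htail s hs k hk1
end

section
/- Let $\phi:[0,\infty)\to(0,\infty)$ be increasing such that $x \mapsto \ln \phi(1/\sqrt{x})$ is convex on $(0,\infty)$. Let $F$ be a finite set of size $m$ and $(a_i)_{i\in F}$ reals with $\sum_{i\in F} a_i^2 \le 1$. Then for every $s > 0$, $\prod_{i\in F} \phi(s/|a_i|)^{-1} \le \phi(s\sqrt{m})^{-m}$ (with the convention $\phi(s/0)^{-1}=\lim_{t\to\infty}\phi(t)^{-1}$, or equivalently assuming all $a_i \ne 0$). -/
open Finset

theorem stmt14 {ι : Type*} (φ : ℝ → ℝ)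
    (hpos : ∀ x, 0 ≤ x → 0 < φ x)
    (hmono : MonotoneOn φ (Set.Ici 0))
    (hconv : ConvexOn ℝ (Set.Ioi (0:ℝ)) (fun x => Real.log (φ (1 / Real.sqrt x))))
    (F : Finset ι) (m : ℕ) (hF : F.card = m)
    (a : ι → ℝ) (ha : ∀ i ∈ F, a i ≠ 0) (hnorm : ∑ i ∈ F, (a i) ^ 2 ≤ 1)
    (s : ℝ) (hs : 0 < s) :
    ∏ i ∈ F, (φ (s / |a i|))⁻¹ ≤ ((φ (s * Real.sqrt m))⁻¹) ^ m := by
  rcases Nat.eq_zero_or_pos m with hm | hm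
  · subst hm
    rw [Finset.card_eq_zero] at hF
    simp [hF]
  have hm' : (0:ℝ) < m := Nat.cast_pos.2 hm
  have hFne : F.Nonempty := Finset.card_pos.1 (hF ▸ hm)
  have hc : 0 < s * Real.sqrt m := by positivity
  have hφc : 0 < φ (s * Real.sqrt m) := hpos _ hc.le
  have hφi : ∀ i ∈ F, 0 < φ (s / |a i|) := fun i hi => hpos _ (by positivity)
  have key : (φ (s * Real.sqrt m)) ^ m ≤ ∏ i ∈ F, φ (s / |a i|) := by
    have hprod : 0 < ∏ i ∈ F, φ (s / |a i|) := Finset.prod_pos hφi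
    rw [← Real.log_le_log_iff (by positivity) hprod,
      Real.log_prod (fun i hi => (hφi i hi).ne'), Real.log_pow]
    set g : ℝ → ℝ := fun x => Real.log (φ (1 / Real.sqrt x)) with hg
    have hx : ∀ i ∈ F, (a i / s)^2 ∈ Set.Ioi (0:ℝ) := by
      intro i hi
      have h := ha i hi
      have h2 : a i / s ≠ 0 := div_ne_zero h hs.ne'
      exact Set.mem_Ioi.2 ((sq_nonneg _).lt_of_ne ((pow_ne_zero 2 h2).symm))
    have hgx : ∀ i ∈ F, g ((a i / s)^2) = Real.log (φ (s / |a i|)) := by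
      intro i hi
      have hsq : Real.sqrt ((a i / s)^2) = |a i| / s := by
        rw [Real.sqrt_sq_eq_abs, abs_div, abs_of_pos hs]
      simp only [hg, hsq, one_div_div]
    have hwsum : (0:ℝ) < ∑ _i ∈ F, (1:ℝ) := by
      simpa [hF] using hm'
    have jensen := hconv.map_centerMass_le (t := F) (w := fun _ => (1:ℝ))
      (p := fun i => (a i / s)^2) (fun i _ => zero_le_one) hwsum hx
    have hcm : F.centerMass (fun _ => (1:ℝ)) (fun i => (a i / s)^2)
        = (m:ℝ)⁻¹ * ∑ i ∈ F, (a i / s)^2 := by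
      simp [Finset.centerMass, hF, smul_eq_mul]
    have hcm2 : F.centerMass (fun _ => (1:ℝ)) (g ∘ fun i => (a i / s)^2)
        = (m:ℝ)⁻¹ * ∑ i ∈ F, g ((a i / s)^2) := by
      simp [Finset.centerMass, hF, smul_eq_mul, Function.comp]
    rw [hcm, hcm2] at jensen
    set xbar : ℝ := (m:ℝ)⁻¹ * ∑ i ∈ F, (a i / s)^2 with hxbar
    have hxbar_pos : 0 < xbar := by
      apply mul_pos (by positivity)
      exact Finset.sum_pos (fun i hi => hx i hi) hFne
    have hxbar_le : xbar ≤ (m:ℝ)⁻¹ * s⁻¹^2 := by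
      apply mul_le_mul_of_nonneg_left _ (by positivity)
      have hh : ∑ i ∈ F, (a i / s)^2 = (∑ i ∈ F, (a i)^2) / s^2 := by
        rw [Finset.sum_div]; exact Finset.sum_congr rfl (fun i _ => div_pow _ _ _)
      rw [hh, inv_pow, ← one_div]
      exact div_le_div_of_nonneg_right hnorm (by positivity)
    -- g is antitone on Ioi 0, and g ((m)⁻¹ * s⁻¹^2) = log (φ (s * √m))
    have hb_pos : (0:ℝ) < (m:ℝ)⁻¹ * s⁻¹^2 := by positivity
    have hmono_g : g ((m:ℝ)⁻¹ * s⁻¹^2) ≤ g xbar := by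
      have h1 : (0:ℝ) ≤ (1:ℝ) / Real.sqrt ((m:ℝ)⁻¹ * s⁻¹^2) := by positivity
      have h2 : (0:ℝ) ≤ (1:ℝ) / Real.sqrt xbar := by positivity
      have h3 : (1:ℝ) / Real.sqrt ((m:ℝ)⁻¹ * s⁻¹^2) ≤ 1 / Real.sqrt xbar := by
        apply one_div_le_one_div_of_le (Real.sqrt_pos.2 hxbar_pos)
        exact Real.sqrt_le_sqrt hxbar_le
      exact Real.log_le_log (hpos _ h1) (hmono h1 h2 h3)
    have hgb : g ((m:ℝ)⁻¹ * s⁻¹^2) = Real.log (φ (s * Real.sqrt m)) := by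
      have : Real.sqrt ((m:ℝ)⁻¹ * s⁻¹^2) = (s * Real.sqrt m)⁻¹ := by
        rw [Real.sqrt_mul (by positivity), Real.sqrt_inv, Real.sqrt_sq_eq_abs,
          abs_of_pos (inv_pos.2 hs), mul_inv, mul_comm]
      rw [hg]
      simp only [this, one_div, inv_inv]
    -- combine
    have hsum : (m:ℝ) * Real.log (φ (s * Real.sqrt m)) ≤ ∑ i ∈ F, Real.log (φ (s / |a i|)) := by
      have step : Real.log (φ (s * Real.sqrt m)) ≤ (m:ℝ)⁻¹ * ∑ i ∈ F, g ((a i / s)^2) :=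
        (hgb ▸ hmono_g).trans jensen
      have := mul_le_mul_of_nonneg_left step hm'.le
      rw [← mul_assoc, mul_inv_cancel₀ hm'.ne', one_mul] at this
      calc (m:ℝ) * Real.log (φ (s * Real.sqrt m)) ≤ ∑ i ∈ F, g ((a i / s)^2) := this
        _ = ∑ i ∈ F, Real.log (φ (s / |a i|)) := Finset.sum_congr rfl hgx
    exact hsum
  have hpow : (0:ℝ) < (φ (s * Real.sqrt m)) ^ m := by positivity
  rw [Finset.prod_inv_distrib, inv_pow]
  exact inv_anti₀ hpow key
end
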